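/- Let ψ be a state with ‖ψ‖ = 1 that is stationary under U (Uψ = ψ), with ⟨ψ₀, ψ⟩ ≠ 0, and suppose ψ maximizes the overlap with the initial state among unit-norm stationary states: for every state φ with ‖φ‖ = 1 and Uφ = φ, |⟨ψ₀, φ⟩| ≤ |⟨ψ₀, ψ⟩|. Then ψ satisfies: (a) for every unmarked vertex a ∉ M, all amplitudes ψ(a,b) over neighbors b of a are equal; (b) for every marked vertex a ∈ M, ∑_{b adjacent to a} ψ(a,b) = 0; and (c) ψ(a,b) = ψ(b,a) for every dart (a,b). -/

import Mathlib

open Finset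

variable {V : Type*} [Fintype V] [DecidableEq V]

/-- The average of the amplitudes of the state `ψ` at vertex `a`:
`avg_ψ(a) = (1/deg a) * ∑_{b ~ a} ψ(a,b)`. -/
noncomputable def avgQ (G : SimpleGraph V) [DecidableRel G.Adj] (ψ : V → V → ℂ) (a : V) : ℂ :=
  (G.degree a : ℂ)⁻¹ * ∑ b ∈ G.neighborFinset a, ψ a b

/-- The oracle query `Q`: flips the sign of amplitudes at marked vertices. -/
def Qop (M : Finset V) (ψ : V → V → ℂ) : V → V → ℂ :=
  fun a b => if a ∈ M then -ψ a b else ψ a b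

/-- The Grover diffusion coin `C`: inversion about the mean at each vertex. -/
noncomputable def Cop (G : SimpleGraph V) [DecidableRel G.Adj] (ψ : V → V → ℂ) : V → V → ℂ :=
  fun a b => 2 * avgQ G ψ a - ψ a b

/-- The flip-flop shift `S`. -/
def Sop (ψ : V → V → ℂ) : V → V → ℂ :=
  fun a b => ψ b a

/-- The quantum walk search operator `U = S ∘ C ∘ Q`. -/
noncomputable def Uop (G : SimpleGraph V) [DecidableRel G.Adj] (M : Finset V)
    (ψ : V → V → ℂ) : V → V → ℂ :=
  Sop (Cop G (Qop M ψ))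

/-- A state is stationary under `U` if `Uψ = ψ` on every dart of `G`. -/
def StationaryU (G : SimpleGraph V) [DecidableRel G.Adj] (M : Finset V)
    (ψ : V → V → ℂ) : Prop :=
  ∀ a b, G.Adj a b → Uop G M ψ a b = ψ a b

/-- The inner product of two states, summing over all darts of `G`. -/
noncomputable def dInner (G : SimpleGraph V) [DecidableRel G.Adj] (φ ψ : V → V → ℂ) : ℂ :=
  ∑ a : V, ∑ b ∈ G.neighborFinset a, (starRingEnd ℂ) (φ a b) * ψ a b

/-- The initial uniform state, assigning `1/√(2|E|)` to every dart. -/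
noncomputable def psi0 (G : SimpleGraph V) [DecidableRel G.Adj] : V → V → ℂ :=
  fun _ _ => (((Real.sqrt (2 * (G.edgeFinset.card : ℝ)))⁻¹ : ℝ) : ℂ)

/-- The norm of a state: `‖ψ‖ = √⟨ψ,ψ⟩`, summing over all darts of `G`. -/
noncomputable def dNorm (G : SimpleGraph V) [DecidableRel G.Adj] (ψ : V → V → ℂ) : ℝ :=
  Real.sqrt (∑ a : V, ∑ b ∈ G.neighborFinset a, Complex.normSq (ψ a b))

/-!
The shift `S` maps stationary states to stationary states: `C` and `Q` are commuting involutions,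
so `S U S = C Q S = U⁻¹`. It also fixes `ψ₀` and preserves norms. Hence the symmetrization
`ψ + Sψ` is stationary with overlap `2⟨ψ₀, ψ⟩`, while the parallelogram law gives
`‖ψ + Sψ‖² + ‖ψ - Sψ‖² = 4`. Maximality of `ψ` forces `‖ψ + Sψ‖ ≥ 2`, hence `ψ = Sψ`.
For a symmetric fixed point, the equation `Uψ = ψ` at the dart `(b, a)` reads
`ψ(a,b) = 2 avg_ψ(a) - ψ(a,b)` if `a ∉ M` and `ψ(a,b) = ψ(a,b) - 2 avg_ψ(a)` if `a ∈ M`.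
-/

section Darts

omit [DecidableEq V]

variable {G : SimpleGraph V} [DecidableRel G.Adj]

lemma sum_neighborFinset_comm {N : Type*} [AddCommMonoid N] (F : V → V → N) :
    ∑ a, ∑ b ∈ G.neighborFinset a, F a b = ∑ a, ∑ b ∈ G.neighborFinset a, F b a :=
  Finset.sum_comm' fun a b => by simp [G.adj_comm]

lemma sum_neighborFinset_eq_degree_mul_avgQ (ψ : V → V → ℂ) (a : V) :
    ∑ b ∈ G.neighborFinset a, ψ a b = G.degree a * avgQ G ψ a := by
  rcases eq_or_ne (G.degree a : ℂ) 0 with h | h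
  · have : G.neighborFinset a = ∅ := card_eq_zero.mp (mod_cast h)
    rw [this, sum_empty, h, zero_mul]
  · rw [avgQ, mul_inv_cancel_left₀ h]

lemma avgQ_Cop (ψ : V → V → ℂ) : avgQ G (Cop G ψ) = avgQ G ψ := by
  funext a
  rcases eq_or_ne (G.degree a : ℂ) 0 with h | h
  · simp [avgQ, h]
  · simp only [avgQ, Cop, sum_sub_distrib, sum_const, G.card_neighborFinset_eq_degree, nsmul_eq_mul]
    field_simp
    ring

lemma Cop_Cop (ψ : V → V → ℂ) : Cop G (Cop G ψ) = ψ := by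
  funext a b
  simp only [Cop, avgQ_Cop]
  ring

lemma dInner_add_right (χ φ ψ : V → V → ℂ) :
    dInner G χ (φ + ψ) = dInner G χ φ + dInner G χ ψ := by
  simp only [dInner, Pi.add_apply, mul_add, sum_add_distrib]

lemma dInner_smul_right (χ ψ : V → V → ℂ) (c : ℂ) : dInner G χ (c • ψ) = c * dInner G χ ψ := by
  simp only [dInner, Pi.smul_apply, smul_eq_mul, mul_sum, mul_left_comm]

lemma dInner_Sop_Sop (φ ψ : V → V → ℂ) : dInner G (Sop φ) (Sop ψ) = dInner G φ ψ :=
  (sum_neighborFinset_comm _).symm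

lemma Sop_psi0 : Sop (psi0 G) = psi0 G := rfl

lemma dNorm_nonneg (ψ : V → V → ℂ) : 0 ≤ dNorm G ψ := Real.sqrt_nonneg _

lemma dNorm_sq (ψ : V → V → ℂ) :
    dNorm G ψ ^ 2 = ∑ a, ∑ b ∈ G.neighborFinset a, Complex.normSq (ψ a b) :=
  Real.sq_sqrt <| sum_nonneg fun _ _ => sum_nonneg fun _ _ => Complex.normSq_nonneg _

lemma dNorm_smul (c : ℂ) (ψ : V → V → ℂ) : dNorm G (c • ψ) = ‖c‖ * dNorm G ψ := by
  simp only [dNorm, Pi.smul_apply, smul_eq_mul, Complex.normSq_mul, ← mul_sum,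
    Real.sqrt_mul (Complex.normSq_nonneg c), Complex.norm_def]

lemma dNorm_Sop (ψ : V → V → ℂ) : dNorm G (Sop ψ) = dNorm G ψ := by
  rw [dNorm, dNorm, sum_neighborFinset_comm]
  rfl

lemma dNorm_add_sq_add_dNorm_sub_sq (φ ψ : V → V → ℂ) :
    dNorm G (φ + ψ) ^ 2 + dNorm G (φ - ψ) ^ 2 = 2 * dNorm G φ ^ 2 + 2 * dNorm G ψ ^ 2 := by
  simp only [dNorm_sq, Pi.add_apply, Pi.sub_apply, Complex.normSq_add, Complex.normSq_sub,
    mul_sum, ← sum_add_distrib]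
  exact sum_congr rfl fun _ _ => sum_congr rfl fun _ _ => by ring

lemma eq_zero_of_dNorm_eq_zero {ψ : V → V → ℂ} (h : dNorm G ψ = 0) {a b : V} (hab : G.Adj a b) :
    ψ a b = 0 := by
  have hnn : ∀ a, ∀ b ∈ G.neighborFinset a, 0 ≤ Complex.normSq (ψ a b) :=
    fun _ _ _ => Complex.normSq_nonneg _
  rw [dNorm, Real.sqrt_eq_zero (sum_nonneg fun a _ => sum_nonneg (hnn a)),
    sum_eq_zero_iff_of_nonneg fun a _ => sum_nonneg (hnn a)] at h
  have := (sum_eq_zero_iff_of_nonneg (hnn a)).mp (h a (mem_univ a)) b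
    ((G.mem_neighborFinset a b).mpr hab)
  exact Complex.normSq_eq_zero.mp this

lemma dInner_eq_zero_of_dNorm_eq_zero (χ : V → V → ℂ) {ψ : V → V → ℂ} (h : dNorm G ψ = 0) :
    dInner G χ ψ = 0 :=
  sum_eq_zero fun a _ => sum_eq_zero fun b hb => by
    rw [eq_zero_of_dNorm_eq_zero h ((G.mem_neighborFinset a b).mp hb), mul_zero]

end Darts

section StationaryStates

variable {G : SimpleGraph V} [DecidableRel G.Adj] {M : Finset V}

lemma avgQ_Qop (ψ : V → V → ℂ) (a : V) :
    avgQ G (Qop M ψ) a = if a ∈ M then -avgQ G ψ a else avgQ G ψ a := by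
  split_ifs with h <;> simp [avgQ, Qop, h]

omit [Fintype V] in
lemma Qop_Qop (ψ : V → V → ℂ) : Qop M (Qop M ψ) = ψ := by
  funext a b
  by_cases h : a ∈ M <;> simp [Qop, h]

lemma Cop_Qop_comm (ψ : V → V → ℂ) : Cop G (Qop M ψ) = Qop M (Cop G ψ) := by
  funext a b
  simp only [Cop, Qop, avgQ_Qop]
  split_ifs <;> ring

lemma Cop_Qop_congr {φ ψ : V → V → ℂ} {a : V} (h : ∀ b ∈ G.neighborFinset a, φ a b = ψ a b)
    {b : V} (hb : b ∈ G.neighborFinset a) : Cop G (Qop M φ) a b = Cop G (Qop M ψ) a b := by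
  have hQ : ∀ c ∈ G.neighborFinset a, Qop M φ a c = Qop M ψ a c := fun c hc => by
    simp only [Qop, h c hc]
  unfold Cop avgQ
  rw [sum_congr rfl hQ, hQ b hb]

lemma Uop_add (φ ψ : V → V → ℂ) : Uop G M (φ + ψ) = Uop G M φ + Uop G M ψ := by
  funext a b
  by_cases h : b ∈ M <;> simp [Uop, Sop, Cop, Qop, avgQ, h, sum_add_distrib] <;> ring

lemma Uop_smul (c : ℂ) (ψ : V → V → ℂ) : Uop G M (c • ψ) = c • Uop G M ψ := by
  funext a b
  by_cases h : b ∈ M <;> simp [Uop, Sop, Cop, Qop, avgQ, h, ← mul_sum] <;> ring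

namespace StationaryU

variable {φ ψ : V → V → ℂ}

lemma add (hφ : StationaryU G M φ) (hψ : StationaryU G M ψ) : StationaryU G M (φ + ψ) :=
  fun a b hab => by rw [Uop_add, Pi.add_apply, Pi.add_apply, hφ a b hab, hψ a b hab]; rfl

lemma smul (hψ : StationaryU G M ψ) (c : ℂ) : StationaryU G M (c • ψ) :=
  fun a b hab => by rw [Uop_smul, Pi.smul_apply, Pi.smul_apply, hψ a b hab]; rfl

lemma Sop (hψ : StationaryU G M ψ) : StationaryU G M (_root_.Sop ψ) := by
  intro a b hab
  have hCQ : ∀ c ∈ G.neighborFinset b, _root_.Sop ψ b c = Qop M (Cop G ψ) b c := fun c hc => by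
    rw [← Cop_Qop_comm]
    exact (hψ c b (G.mem_neighborFinset b c |>.mp hc).symm).symm
  change Cop G (Qop M (_root_.Sop ψ)) b a = ψ b a
  rw [Cop_Qop_congr hCQ (G.mem_neighborFinset b a |>.mpr hab.symm), Qop_Qop, Cop_Cop]

end StationaryU

end StationaryStates

section OptimalStationaryState

variable {G : SimpleGraph V} [DecidableRel G.Adj] {M : Finset V} {χ ψ : V → V → ℂ}

lemma norm_dInner_le_dNorm_mul
    (hmax : ∀ φ : V → V → ℂ, dNorm G φ = 1 → StationaryU G M φ →
      ‖dInner G χ φ‖ ≤ ‖dInner G χ ψ‖)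
    {φ : V → V → ℂ} (hφ : StationaryU G M φ) :
    ‖dInner G χ φ‖ ≤ dNorm G φ * ‖dInner G χ ψ‖ := by
  rcases eq_or_ne (dNorm G φ) 0 with h | h
  · simp [dInner_eq_zero_of_dNorm_eq_zero χ h, h]
  · have hpos : 0 < dNorm G φ := (dNorm_nonneg φ).lt_of_ne' h
    have hunit : dNorm G (((dNorm G φ)⁻¹ : ℂ) • φ) = 1 := by
      rw [dNorm_smul, norm_inv, Complex.norm_real, Real.norm_of_nonneg hpos.le, inv_mul_cancel₀ h]
    have := hmax _ hunit (hφ.smul _)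
    rwa [dInner_smul_right, norm_mul, norm_inv, Complex.norm_real, Real.norm_of_nonneg hpos.le,
      inv_mul_le_iff₀ hpos] at this

lemma symm_of_maximal_overlap (hnorm : dNorm G ψ = 1) (hstat : StationaryU G M ψ)
    (hover : dInner G (psi0 G) ψ ≠ 0)
    (hmax : ∀ φ : V → V → ℂ, dNorm G φ = 1 → StationaryU G M φ →
      ‖dInner G (psi0 G) φ‖ ≤ ‖dInner G (psi0 G) ψ‖)
    {a b : V} (hab : G.Adj a b) : ψ a b = ψ b a := by
  have hsymm_overlap : dInner G (psi0 G) (ψ + Sop ψ) = 2 * dInner G (psi0 G) ψ := by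
    rw [dInner_add_right, ← Sop_psi0, dInner_Sop_Sop, Sop_psi0, two_mul]
  have hle := norm_dInner_le_dNorm_mul hmax (hstat.add hstat.Sop)
  rw [hsymm_overlap, norm_mul, Complex.norm_two] at hle
  have hsymm_norm : 2 ≤ dNorm G (ψ + Sop ψ) :=
    le_of_mul_le_mul_right hle (norm_pos_iff.mpr hover)
  have hpar := dNorm_add_sq_add_dNorm_sub_sq (G := G) ψ (Sop ψ)
  rw [dNorm_Sop, hnorm] at hpar
  have hanti : dNorm G (ψ - Sop ψ) ^ 2 = 0 := by
    nlinarith [sq_nonneg (dNorm G (ψ - Sop ψ))]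
  exact sub_eq_zero.mp (eq_zero_of_dNorm_eq_zero (pow_eq_zero_iff two_ne_zero |>.mp hanti) hab)

lemma eq_avgQ_of_symm (hstat : StationaryU G M ψ) {a b : V} (hab : G.Adj a b)
    (hsymm : ψ a b = ψ b a) (ha : a ∉ M) : ψ a b = avgQ G ψ a := by
  have h := hstat b a hab.symm
  simp only [Uop, Sop, Cop, Qop, if_neg ha, avgQ_Qop] at h
  linear_combination (hsymm - h) / 2

lemma avgQ_eq_zero_of_symm (hstat : StationaryU G M ψ) {a b : V} (hab : G.Adj a b)
    (hsymm : ψ a b = ψ b a) (ha : a ∈ M) : avgQ G ψ a = 0 := by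
  have h := hstat b a hab.symm
  simp only [Uop, Sop, Cop, Qop, if_pos ha, avgQ_Qop] at h
  linear_combination (hsymm - h) / 2

end OptimalStationaryState

theorem optimal_stationary_state_general (G : SimpleGraph V) [DecidableRel G.Adj]
    (M : Finset V) (ψ : V → V → ℂ)
    (hnorm : dNorm G ψ = 1) (hstat : StationaryU G M ψ)
    (hover : dInner G (psi0 G) ψ ≠ 0)
    (hmax : ∀ φ : V → V → ℂ, dNorm G φ = 1 → StationaryU G M φ →
      ‖dInner G (psi0 G) φ‖ ≤ ‖dInner G (psi0 G) ψ‖) :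
    (∀ a, a ∉ M → ∀ b ∈ G.neighborFinset a, ∀ c ∈ G.neighborFinset a, ψ a b = ψ a c) ∧
    (∀ a ∈ M, ∑ b ∈ G.neighborFinset a, ψ a b = 0) ∧
    (∀ a b, G.Adj a b → ψ a b = ψ b a) := by
  have hsymm : ∀ a b, G.Adj a b → ψ a b = ψ b a := fun a b =>
    symm_of_maximal_overlap hnorm hstat hover hmax
  have huniform : ∀ a ∉ M, ∀ b ∈ G.neighborFinset a, ψ a b = avgQ G ψ a := fun a ha b hb =>
    have hab := (G.mem_neighborFinset a b).mp hb
    eq_avgQ_of_symm hstat hab (hsymm a b hab) ha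
  refine ⟨fun a ha b hb c hc => (huniform a ha b hb).trans (huniform a ha c hc).symm,
    fun a ha => ?_, hsymm⟩
  rcases (G.neighborFinset a).eq_empty_or_nonempty with h | ⟨b, hb⟩
  · rw [h, sum_empty]
  · have hab := (G.mem_neighborFinset a b).mp hb
    rw [sum_neighborFinset_eq_degree_mul_avgQ, avgQ_eq_zero_of_symm hstat hab (hsymm a b hab) ha,
      mul_zero]

/-- A unit-norm stationary state with nonzero overlap that maximizes the overlap with the
initial uniform state among unit-norm stationary states is uniform at unmarked vertices,
flip at marked vertices, and symmetric on every edge. -/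
theorem optimal_stationary_state (G : SimpleGraph V) [DecidableRel G.Adj]
    (M : Finset V) (hdeg : ∀ v, 0 < G.degree v) (ψ : V → V → ℂ)
    (hnorm : dNorm G ψ = 1) (hstat : StationaryU G M ψ)
    (hover : dInner G (psi0 G) ψ ≠ 0)
    (hmax : ∀ φ : V → V → ℂ, dNorm G φ = 1 → StationaryU G M φ →
      ‖dInner G (psi0 G) φ‖ ≤ ‖dInner G (psi0 G) ψ‖) :
    (∀ a, a ∉ M → ∀ b ∈ G.neighborFinset a, ∀ c ∈ G.neighborFinset a, ψ a b = ψ a c) ∧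
    (∀ a ∈ M, ∑ b ∈ G.neighborFinset a, ψ a b = 0) ∧
    (∀ a b, G.Adj a b → ψ a b = ψ b a) :=
  optimal_stationary_state_general G M ψ hnorm hstat hover hmax
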